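/- arXiv:1209.6341 — 2 statements merged into one kernel-verified Lean document; each statement's English description precedes it below -/
import Mathlib

section
/- Let Ai denote the Airy function, characterized by the contour integral representation Ai(b² + c)·exp(2b³/3 + bc) = (1/2πi) ∫ exp(w³/3 + b w² − c w) dw over the contour from e^{−iπ/3}∞ to e^{iπ/3}∞, valid for all real b, c. Then for all real x, y and all L > 0, (1/√(4πL)) ∫_ℝ exp(−(x−z)²/(4L)) · exp(−2L³/3) · exp(−L(y+z)) · Ai(y + z + L²) dz = Ai(x + y). -/
open MeasureTheory Real

/-- Parametrization of the contour from `e^{-iπ/3}∞` to `e^{iπ/3}∞` through the origin. -/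
noncomputable def airyContour (t : ℝ) : ℂ :=
  if 0 ≤ t then Complex.exp (Real.pi * Complex.I / 3) * t
  else -(Complex.exp (-(Real.pi * Complex.I) / 3)) * t

/-- Derivative of the contour parametrization. -/
noncomputable def airyContourDeriv (t : ℝ) : ℂ :=
  if 0 ≤ t then Complex.exp (Real.pi * Complex.I / 3)
  else -(Complex.exp (-(Real.pi * Complex.I) / 3))

lemma omega_eq : Complex.exp (Real.pi * Complex.I / 3) = ⟨1/2, Real.sqrt 3 / 2⟩ := by
  have h : (Real.pi * Complex.I / 3 : ℂ) = ((Real.pi/3 : ℝ) : ℂ) * Complex.I := by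
    push_cast; ring
  rw [h, Complex.exp_mul_I, ← Complex.ofReal_cos, ← Complex.ofReal_sin,
    Real.cos_pi_div_three, Real.sin_pi_div_three]
  apply Complex.ext <;> simp

lemma omegabar_eq : Complex.exp (-(Real.pi * Complex.I) / 3) = ⟨1/2, -(Real.sqrt 3 / 2)⟩ := by
  have h : (-(Real.pi * Complex.I) / 3 : ℂ) = ((-(Real.pi/3) : ℝ) : ℂ) * Complex.I := by
    push_cast; ring
  rw [h, Complex.exp_mul_I, ← Complex.ofReal_cos, ← Complex.ofReal_sin,
    Real.cos_neg, Real.sin_neg, Real.cos_pi_div_three, Real.sin_pi_div_three]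
  apply Complex.ext <;> simp

lemma sqrt3_sq : Real.sqrt 3 ^ 2 = 3 := Real.sq_sqrt (by norm_num)

lemma airyContour_cube (t : ℝ) : (airyContour t) ^ 3 = ((-|t| ^ 3 : ℝ) : ℂ) := by
  have h1 : Complex.exp (Real.pi * Complex.I / 3) ^ 3 = -1 := by
    rw [← Complex.exp_nat_mul]
    rw [show (3 : ℕ) * (Real.pi * Complex.I / 3) = Real.pi * Complex.I by push_cast; ring]
    exact Complex.exp_pi_mul_I
  have h2 : Complex.exp (-(Real.pi * Complex.I) / 3) ^ 3 = -1 := by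
    rw [← Complex.exp_nat_mul]
    rw [show (3 : ℕ) * (-(Real.pi * Complex.I) / 3) = -(Real.pi * Complex.I) by push_cast; ring]
    rw [Complex.exp_neg, Complex.exp_pi_mul_I]
    norm_num
  unfold airyContour
  split_ifs with h
  · rw [abs_of_nonneg h, mul_pow, h1]; push_cast; ring
  · rw [abs_of_neg (lt_of_not_ge h), mul_pow, neg_pow, h2]; push_cast; ring

lemma airyContour_sq_re (t : ℝ) : ((airyContour t) ^ 2).re = -t^2/2 := by
  have := sqrt3_sq
  unfold airyContour
  split_ifs with h <;>
    simp [omega_eq, omegabar_eq, pow_two, Complex.mul_re, Complex.mul_im] <;> nlinarith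

lemma airyContour_re (t : ℝ) : (airyContour t).re = |t|/2 := by
  unfold airyContour
  split_ifs with h
  · rw [abs_of_nonneg h]; simp [omega_eq, Complex.mul_re]; ring
  · rw [abs_of_neg (lt_of_not_ge h)]; simp [omegabar_eq, Complex.mul_re]; ring

lemma airyContourDeriv_abs (t : ℝ) : ‖airyContourDeriv t‖ = 1 := by
  unfold airyContourDeriv
  split_ifs with h <;> simp [Complex.norm_exp]

lemma measurable_airyContour : Measurable airyContour := by
  unfold airyContour
  exact Measurable.ite (measurableSet_le measurable_const measurable_id)
    (by fun_prop) (by fun_prop)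

lemma measurable_airyContourDeriv : Measurable airyContourDeriv := by
  unfold airyContourDeriv
  exact Measurable.ite (measurableSet_le measurable_const measurable_id)
    measurable_const measurable_const

lemma abs_integrand (b c t : ℝ) :
    ‖Complex.exp ((airyContour t) ^ 3 / 3 + (b : ℂ) * (airyContour t) ^ 2
        - (c : ℂ) * airyContour t) * airyContourDeriv t‖
      = Real.exp (-|t| ^ 3 / 3 - b * t ^ 2 / 2 - c * |t| / 2) := by
  rw [norm_mul, airyContourDeriv_abs, mul_one, Complex.norm_exp]
  congr 1
  rw [Complex.sub_re, Complex.add_re, airyContour_cube]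
  have h2 : ((b : ℂ) * (airyContour t) ^ 2).re = b * (-t^2/2) := by
    rw [Complex.mul_re, Complex.ofReal_re, Complex.ofReal_im, airyContour_sq_re]; ring
  have h1 : ((c : ℂ) * airyContour t).re = c * (|t|/2) := by
    rw [Complex.mul_re, Complex.ofReal_re, Complex.ofReal_im, airyContour_re]; ring
  rw [h1, h2]
  have h3 : (((-|t| ^ 3 : ℝ) : ℂ) / 3).re = -|t|^3/3 := by
    rw [show (((-|t| ^ 3 : ℝ) : ℂ) / 3) = (((-|t| ^ 3 / 3 : ℝ)) : ℂ) by push_cast; ring,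
      Complex.ofReal_re]
  rw [h3]; ring

lemma cubic_bound (c d : ℝ) (hc : 0 ≤ c) (hd : 0 ≤ d) (s : ℝ) (hs : 0 ≤ s) :
    -s ^ 3 / 3 + c * s ^ 2 + d * s ≤ c * (3 * (c + d + 1)) ^ 2 + d * (3 * (c + d + 1)) := by
  rcases le_total s (3 * (c + d + 1)) with h | h
  · nlinarith [mul_le_mul_of_nonneg_left (pow_le_pow_left₀ hs h 2) hc,
      mul_le_mul_of_nonneg_left h hd, pow_nonneg hs 3]
  · nlinarith [mul_le_mul_of_nonneg_right h (sq_nonneg s), mul_nonneg hd hs,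
      mul_nonneg hc (sq_nonneg (c + d + 1)), mul_nonneg hd (by linarith : (0:ℝ) ≤ c + d + 1),
      mul_le_mul_of_nonneg_left (show s ≤ s ^ 2 by nlinarith) hd]

lemma joint_integrable (L x y : ℝ) (hL : 0 < L) :
    Integrable (fun p : ℝ × ℝ =>
      Complex.exp ((-(x - p.1) ^ 2 / (4 * L) : ℝ) : ℂ) *
        (Complex.exp ((airyContour p.2) ^ 3 / 3 + ((-L : ℝ) : ℂ) * (airyContour p.2) ^ 2
            - ((y + p.1 : ℝ) : ℂ) * airyContour p.2) * airyContourDeriv p.2))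
      (volume.prod volume) := by
  set a : ℝ := (4 * L)⁻¹ with ha_def
  have ha : 0 < a := by positivity
  have haL : 4 * L * a = 1 := by rw [ha_def]; exact mul_inv_cancel₀ (by positivity)
  set c : ℝ := 3 * L / 2 + 1 with hc_def
  set d : ℝ := |y| / 2 with hd_def
  set M : ℝ := c * (3 * (c + d + 1)) ^ 2 + d * (3 * (c + d + 1)) with hM_def
  have hc : 0 ≤ c := by positivity
  have hd : 0 ≤ d := by positivity
  have hbound : Integrable (fun p : ℝ × ℝ =>
      (Real.exp (x ^ 2 * a) * Real.exp (-(a / 4) * p.1 ^ 2)) *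
        (Real.exp M * Real.exp (-(1 : ℝ) * p.2 ^ 2))) (volume.prod volume) := by
    have hI1 : Integrable (fun u : ℝ => Real.exp (x ^ 2 * a) * Real.exp (-(a / 4) * u ^ 2)) :=
      (integrable_exp_neg_mul_sq (by positivity)).const_mul _
    have hI2 : Integrable (fun u : ℝ => Real.exp M * Real.exp (-(1 : ℝ) * u ^ 2)) :=
      (integrable_exp_neg_mul_sq (by norm_num)).const_mul _
    exact hI1.mul_prod hI2
  apply hbound.mono'
  · apply Measurable.aestronglyMeasurable
    apply Measurable.mul
    · exact Complex.measurable_exp.comp (Complex.measurable_ofReal.comp (by fun_prop))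
    · apply Measurable.mul _ (measurable_airyContourDeriv.comp measurable_snd)
      apply Complex.measurable_exp.comp
      apply Measurable.sub
      · apply Measurable.add
        · exact ((measurable_airyContour.comp measurable_snd).pow_const 3).div_const 3
        · exact measurable_const.mul ((measurable_airyContour.comp measurable_snd).pow_const 2)
      · exact (Complex.measurable_ofReal.comp (by fun_prop)).mul
          (measurable_airyContour.comp measurable_snd)
  · filter_upwards with p
    obtain ⟨z, t⟩ := p
    rw [norm_mul, abs_integrand (-L) (y + z) t]
    have habs : ‖Complex.exp ((-(x - z) ^ 2 / (4 * L) : ℝ) : ℂ)‖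
        = Real.exp (-(x - z) ^ 2 / (4 * L)) := by
      rw [Complex.norm_exp, Complex.ofReal_re]
    rw [habs, ← Real.exp_add, ← Real.exp_add, ← Real.exp_add, ← Real.exp_add]
    rw [Real.exp_le_exp]
    have hM := cubic_bound c d hc hd |t| (abs_nonneg t)
    rw [sq_abs] at hM
    have h1 : z ^ 2 / 2 - x ^ 2 ≤ (x - z) ^ 2 := by nlinarith [sq_nonneg (2 * x - z)]
    have hA : -(x - z) ^ 2 * a ≤ x ^ 2 * a - (a / 4) * z ^ 2 - (a / 4) * z ^ 2 := by
      nlinarith [mul_le_mul_of_nonneg_right h1 ha.le]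
    have h2 : |z| * |t| / 2 ≤ a / 4 * z ^ 2 + L * t ^ 2 := by
      have key : a / 4 * z ^ 2 + L * t ^ 2 - |z| * |t| / 2 = (|z| - 4 * L * |t|) ^ 2 / (16 * L) := by
        rw [ha_def]
        field_simp
        linear_combination (-32) * sq_abs z + (-512 * L ^ 2) * sq_abs t
      have hpos : 0 ≤ (|z| - 4 * L * |t|) ^ 2 / (16 * L) := by positivity
      linarith
    have h3 : -(y + z) * |t| / 2 ≤ |y| * |t| / 2 + |z| * |t| / 2 := by
      have : -(y + z) ≤ |y| + |z| := by
        calc -(y + z) ≤ |y + z| := neg_le_abs _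
        _ ≤ |y| + |z| := abs_add_le _ _
      nlinarith [abs_nonneg t]
    have hdiv : -(x - z) ^ 2 / (4 * L) = -(x - z) ^ 2 * a := by
      rw [ha_def, div_eq_mul_inv]
    have hM' : -|t| ^ 3 / 3 + (3 * L / 2 + 1) * t ^ 2 + (|y| / 2) * |t| ≤ M := by
      rw [hc_def, hd_def] at hM; exact hM
    rw [hdiv]
    linarith [hM', hA, h2, h3]

lemma gaussian_step (L x y : ℝ) (hL : 0 < L) (t : ℝ) :
    (∫ z : ℝ, Complex.exp ((-(x - z) ^ 2 / (4 * L) : ℝ) : ℂ) *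
      (Complex.exp ((airyContour t) ^ 3 / 3 + ((-L : ℝ) : ℂ) * (airyContour t) ^ 2
          - ((y + z : ℝ) : ℂ) * airyContour t) * airyContourDeriv t))
    = (Real.sqrt (4 * Real.pi * L) : ℂ) *
      (Complex.exp ((airyContour t) ^ 3 / 3 + ((0 : ℝ) : ℂ) * (airyContour t) ^ 2
          - ((x + y : ℝ) : ℂ) * airyContour t) * airyContourDeriv t) := by
  have hL4 : (0:ℝ) < 4 * Real.pi * L := by positivity
  have hLC : (L : ℂ) ≠ 0 := by exact_mod_cast hL.ne'
  set w := airyContour t with hw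
  set w' := airyContourDeriv t with hw'
  set b : ℂ := ((-(1 / (4 * L)) : ℝ) : ℂ) with hb_def
  set c : ℂ := ((x / (2 * L) : ℝ) : ℂ) - w with hc_def
  set d : ℂ := ((-(x ^ 2) / (4 * L) : ℝ) : ℂ) with hd_def
  have hb : b.re < 0 := by
    rw [hb_def, Complex.ofReal_re]
    have : (0:ℝ) < 1 / (4 * L) := by positivity
    linarith
  have hb0 : b ≠ 0 := by
    intro h; rw [h] at hb; simp at hb
  have hpt : ∀ z : ℝ,
      Complex.exp ((-(x - z) ^ 2 / (4 * L) : ℝ) : ℂ) *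
        (Complex.exp (w ^ 3 / 3 + ((-L : ℝ) : ℂ) * w ^ 2 - ((y + z : ℝ) : ℂ) * w) * w')
      = (Complex.exp (w ^ 3 / 3 + ((-L : ℝ) : ℂ) * w ^ 2 - ((y : ℝ) : ℂ) * w) * w') *
          Complex.exp (b * (z:ℂ) ^ 2 + c * (z:ℂ) + d) := by
    intro z
    have key : ((-(x - z) ^ 2 / (4 * L) : ℝ) : ℂ)
          + (w ^ 3 / 3 + ((-L : ℝ) : ℂ) * w ^ 2 - ((y + z : ℝ) : ℂ) * w)
        = (w ^ 3 / 3 + ((-L : ℝ) : ℂ) * w ^ 2 - ((y : ℝ) : ℂ) * w)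
          + (b * (z:ℂ) ^ 2 + c * (z:ℂ) + d) := by
      rw [hb_def, hc_def, hd_def]
      push_cast
      ring_nf
    calc Complex.exp ((-(x - z) ^ 2 / (4 * L) : ℝ) : ℂ) *
        (Complex.exp (w ^ 3 / 3 + ((-L : ℝ) : ℂ) * w ^ 2 - ((y + z : ℝ) : ℂ) * w) * w')
        = Complex.exp (((-(x - z) ^ 2 / (4 * L) : ℝ) : ℂ)
            + (w ^ 3 / 3 + ((-L : ℝ) : ℂ) * w ^ 2 - ((y + z : ℝ) : ℂ) * w)) * w' := by
          rw [Complex.exp_add]; ring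
      _ = Complex.exp ((w ^ 3 / 3 + ((-L : ℝ) : ℂ) * w ^ 2 - ((y : ℝ) : ℂ) * w)
            + (b * (z:ℂ) ^ 2 + c * (z:ℂ) + d)) * w' := by rw [key]
      _ = (Complex.exp (w ^ 3 / 3 + ((-L : ℝ) : ℂ) * w ^ 2 - ((y : ℝ) : ℂ) * w) * w') *
          Complex.exp (b * (z:ℂ) ^ 2 + c * (z:ℂ) + d) := by rw [Complex.exp_add]; ring
  rw [integral_congr_ae (Filter.Eventually.of_forall hpt), integral_const_mul,
    integral_cexp_quadratic hb c d]
  have e1 : ((Real.pi : ℂ) / -b) = ((4 * Real.pi * L : ℝ) : ℂ) := by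
    rw [hb_def, ← Complex.ofReal_neg, ← Complex.ofReal_div]
    norm_cast
    rw [neg_neg]
    field_simp
  have e2 : ((4 * Real.pi * L : ℝ) : ℂ) ^ (1 / 2 : ℂ) = (Real.sqrt (4 * Real.pi * L) : ℂ) := by
    rw [show ((1:ℂ)/2) = (((1:ℝ)/2 : ℝ) : ℂ) by norm_num, ← Complex.ofReal_cpow hL4.le,
      Real.sqrt_eq_rpow]
  have e3 : d - c ^ 2 / (4 * b) = (L : ℂ) * w ^ 2 - (x : ℂ) * w := by
    rw [hb_def, hc_def, hd_def]
    have h1 : ((L:ℂ))⁻¹ * (L:ℂ) = 1 := inv_mul_cancel₀ hLC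
    push_cast
    ring_nf
    simp only [inv_inv]
    linear_combination (-(x:ℂ)*w + ((x:ℂ)^2/4)*((L:ℂ))⁻¹)*h1
  rw [e1, e2, e3]
  have e4 : Complex.exp (w ^ 3 / 3 + ((-L : ℝ) : ℂ) * w ^ 2 - ((y : ℝ) : ℂ) * w) *
      Complex.exp ((L : ℂ) * w ^ 2 - (x : ℂ) * w)
      = Complex.exp (w ^ 3 / 3 + ((0 : ℝ) : ℂ) * w ^ 2 - ((x + y : ℝ) : ℂ) * w) := by
    rw [← Complex.exp_add]
    congr 1
    push_cast
    ring
  calc (Complex.exp (w ^ 3 / 3 + ((-L : ℝ) : ℂ) * w ^ 2 - ((y : ℝ) : ℂ) * w) * w') *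
      ((Real.sqrt (4 * Real.pi * L) : ℂ) * Complex.exp ((L : ℂ) * w ^ 2 - (x : ℂ) * w))
      = (Real.sqrt (4 * Real.pi * L) : ℂ) *
        ((Complex.exp (w ^ 3 / 3 + ((-L : ℝ) : ℂ) * w ^ 2 - ((y : ℝ) : ℂ) * w) *
          Complex.exp ((L : ℂ) * w ^ 2 - (x : ℂ) * w)) * w') := by ring
    _ = _ := by rw [e4]

/-- If `Ai` satisfies the contour integral representation
`Ai(b² + c) e^{2b³/3 + bc} = (1/2πi) ∫_{e^{-iπ/3}∞}^{e^{iπ/3}∞} e^{w³/3 + bw² - cw} dw`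
for all real `b, c`, then for all real `x, y` and `L > 0`,
`(1/√(4πL)) ∫_ℝ e^{-(x-z)²/(4L)} e^{-2L³/3} e^{-L(y+z)} Ai(y+z+L²) dz = Ai(x+y)`. -/
theorem airy_heat_convolution_identity
    (Ai : ℝ → ℝ)
    (hAi : ∀ b c : ℝ,
      ((Ai (b ^ 2 + c) * Real.exp (2 * b ^ 3 / 3 + b * c) : ℝ) : ℂ)
        = (2 * Real.pi * Complex.I)⁻¹ *
            ∫ t : ℝ, Complex.exp ((airyContour t) ^ 3 / 3 + (b : ℂ) * (airyContour t) ^ 2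
                - (c : ℂ) * airyContour t) * airyContourDeriv t)
    (L x y : ℝ) (hL : 0 < L) :
    (1 / Real.sqrt (4 * Real.pi * L)) *
      ∫ z : ℝ, Real.exp (-(x - z) ^ 2 / (4 * L)) * Real.exp (-2 * L ^ 3 / 3) *
        Real.exp (-L * (y + z)) * Ai (y + z + L ^ 2)
      = Ai (x + y) := by
  have hL4 : (0:ℝ) < 4 * Real.pi * L := by positivity
  have hS : (0:ℝ) < Real.sqrt (4 * Real.pi * L) := Real.sqrt_pos.mpr hL4
  apply Complex.ofReal_injective
  have hcast : ((∫ z : ℝ, Real.exp (-(x - z) ^ 2 / (4 * L)) * Real.exp (-2 * L ^ 3 / 3) *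
        Real.exp (-L * (y + z)) * Ai (y + z + L ^ 2) : ℝ) : ℂ)
      = ∫ z : ℝ, ((Real.exp (-(x - z) ^ 2 / (4 * L)) * Real.exp (-2 * L ^ 3 / 3) *
        Real.exp (-L * (y + z)) * Ai (y + z + L ^ 2) : ℝ) : ℂ) :=
    (integral_ofReal (𝕜 := ℂ)).symm
  rw [Complex.ofReal_mul, hcast]
  have hz : ∀ z : ℝ,
      ((Real.exp (-(x - z) ^ 2 / (4 * L)) * Real.exp (-2 * L ^ 3 / 3) *
        Real.exp (-L * (y + z)) * Ai (y + z + L ^ 2) : ℝ) : ℂ)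
      = Complex.exp ((-(x - z) ^ 2 / (4 * L) : ℝ) : ℂ) *
          ((2 * Real.pi * Complex.I)⁻¹ *
            ∫ t : ℝ, Complex.exp ((airyContour t) ^ 3 / 3
              + ((-L : ℝ) : ℂ) * (airyContour t) ^ 2
              - ((y + z : ℝ) : ℂ) * airyContour t) * airyContourDeriv t) := by
    intro z
    have h := hAi (-L) (y + z)
    have e : Ai ((-L) ^ 2 + (y + z)) * Real.exp (2 * (-L) ^ 3 / 3 + -L * (y + z))
        = Real.exp (-2 * L ^ 3 / 3) * Real.exp (-L * (y + z)) * Ai (y + z + L ^ 2) := by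
      rw [show (-L) ^ 2 + (y + z) = y + z + L ^ 2 by ring, ← Real.exp_add]
      rw [show -2 * L ^ 3 / 3 + -L * (y + z) = 2 * (-L) ^ 3 / 3 + -L * (y + z) by ring]
      ring
    rw [e] at h
    rw [show Real.exp (-(x - z) ^ 2 / (4 * L)) * Real.exp (-2 * L ^ 3 / 3) *
          Real.exp (-L * (y + z)) * Ai (y + z + L ^ 2)
        = Real.exp (-(x - z) ^ 2 / (4 * L)) *
          (Real.exp (-2 * L ^ 3 / 3) * Real.exp (-L * (y + z)) * Ai (y + z + L ^ 2)) by ring]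
    rw [Complex.ofReal_mul, h, Complex.ofReal_exp]
  calc ((1 / Real.sqrt (4 * Real.pi * L) : ℝ) : ℂ) *
      ∫ z : ℝ, ((Real.exp (-(x - z) ^ 2 / (4 * L)) * Real.exp (-2 * L ^ 3 / 3) *
        Real.exp (-L * (y + z)) * Ai (y + z + L ^ 2) : ℝ) : ℂ)
      = ((1 / Real.sqrt (4 * Real.pi * L) : ℝ) : ℂ) *
        ∫ z : ℝ, (2 * Real.pi * Complex.I)⁻¹ *
          ∫ t : ℝ, Complex.exp ((-(x - z) ^ 2 / (4 * L) : ℝ) : ℂ) *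
            (Complex.exp ((airyContour t) ^ 3 / 3 + ((-L : ℝ) : ℂ) * (airyContour t) ^ 2
              - ((y + z : ℝ) : ℂ) * airyContour t) * airyContourDeriv t) := by
        congr 1
        refine integral_congr_ae (Filter.Eventually.of_forall fun z => ?_)
        dsimp only
        rw [hz z, integral_const_mul]
        ring
    _ = ((1 / Real.sqrt (4 * Real.pi * L) : ℝ) : ℂ) *
        ((2 * Real.pi * Complex.I)⁻¹ *
          ∫ z : ℝ, ∫ t : ℝ, Complex.exp ((-(x - z) ^ 2 / (4 * L) : ℝ) : ℂ) *
            (Complex.exp ((airyContour t) ^ 3 / 3 + ((-L : ℝ) : ℂ) * (airyContour t) ^ 2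
              - ((y + z : ℝ) : ℂ) * airyContour t) * airyContourDeriv t)) := by
        rw [integral_const_mul]
    _ = ((1 / Real.sqrt (4 * Real.pi * L) : ℝ) : ℂ) *
        ((2 * Real.pi * Complex.I)⁻¹ *
          ∫ t : ℝ, ∫ z : ℝ, Complex.exp ((-(x - z) ^ 2 / (4 * L) : ℝ) : ℂ) *
            (Complex.exp ((airyContour t) ^ 3 / 3 + ((-L : ℝ) : ℂ) * (airyContour t) ^ 2
              - ((y + z : ℝ) : ℂ) * airyContour t) * airyContourDeriv t)) := by
        rw [integral_integral_swap (joint_integrable L x y hL)]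
    _ = ((1 / Real.sqrt (4 * Real.pi * L) : ℝ) : ℂ) *
        ((2 * Real.pi * Complex.I)⁻¹ *
          ∫ t : ℝ, (Real.sqrt (4 * Real.pi * L) : ℂ) *
            (Complex.exp ((airyContour t) ^ 3 / 3 + ((0 : ℝ) : ℂ) * (airyContour t) ^ 2
              - ((x + y : ℝ) : ℂ) * airyContour t) * airyContourDeriv t)) := by
        congr 2
        exact integral_congr_ae (Filter.Eventually.of_forall fun t => gaussian_step L x y hL t)
    _ = (((1 / Real.sqrt (4 * Real.pi * L) : ℝ) : ℂ) * (Real.sqrt (4 * Real.pi * L) : ℂ)) *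
        ((2 * Real.pi * Complex.I)⁻¹ *
          ∫ t : ℝ, Complex.exp ((airyContour t) ^ 3 / 3 + ((0 : ℝ) : ℂ) * (airyContour t) ^ 2
              - ((x + y : ℝ) : ℂ) * airyContour t) * airyContourDeriv t) := by
        rw [integral_const_mul]
        ring
    _ = ((Ai (x + y) : ℝ) : ℂ) := by
        have h0 := hAi 0 (x + y)
        rw [show (0:ℝ) ^ 2 + (x + y) = x + y by ring,
          show 2 * (0:ℝ) ^ 3 / 3 + 0 * (x + y) = 0 by ring, Real.exp_zero, mul_one] at h0
        rw [← h0, ← Complex.ofReal_mul, one_div, inv_mul_cancel₀ hS.ne', Complex.ofReal_one,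
          one_mul]
end

section
/- For every L > 0 and x, y ∈ ℝ, the heat semigroup applied to the Airy kernel factor B₀(x, y) = Ai(x + y) satisfies (e^{−LΔ} B₀)(x, y) = e^{−2L³/3 − (x+y)L} Ai(x + y + L²), where e^{−LΔ} acts on the first variable and Δ = d²/dx², in the sense that the right-hand side g_L(x,y) := e^{−2L³/3 − (x+y)L} Ai(x+y+L²) satisfies ∂_L g_L = −∂_x² g_L with g_0(x,y) = Ai(x+y). -/
open Real

/-- The backward heat flow applied to `B₀(x,y) = Ai(x+y)` is given explicitly by
`g_L(x,y) = e^{-2L³/3 - (x+y)L} Ai(x+y+L²)`, in the sense that `g` satisfies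
`∂_L g_L(x,y) = -∂_x² g_L(x,y)` for all `L > 0` and `g_0(x,y) = Ai(x+y)`,
where `Ai` is a twice differentiable solution of the Airy ODE `Ai''(t) = t Ai(t)`. -/
theorem heat_flow_of_airy_kernel
    (Ai : ℝ → ℝ) (hAi : ContDiff ℝ 2 Ai)
    (hAiODE : ∀ t : ℝ, deriv (deriv Ai) t = t * Ai t)
    (g : ℝ → ℝ → ℝ → ℝ)
    (hg : ∀ L x y : ℝ, g L x y =
      Real.exp (-2 * L ^ 3 / 3 - (x + y) * L) * Ai (x + y + L ^ 2)) :
    (∀ L x y : ℝ, 0 < L →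
      deriv (fun L' => g L' x y) L = -(deriv (deriv fun x' => g L x' y) x)) ∧
    (∀ x y : ℝ, g 0 x y = Ai (x + y)) := by
  have hAi1 : Differentiable ℝ Ai := hAi.differentiable (by norm_num)
  have hAi2 : Differentiable ℝ (deriv Ai) := by
    have h := (contDiff_succ_iff_deriv.mp
      (show ContDiff ℝ ((1 : ℕ) + 1) Ai by exact_mod_cast hAi)).2
    exact h.2.differentiable (by norm_num)
  constructor
  · intro L x y _
    -- first x-derivative
    have hx : ∀ x : ℝ, HasDerivAt (fun x' => g L x' y)
        (Real.exp (-2*L^3/3 - (x+y)*L) *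
          (deriv Ai (x+y+L^2) - L * Ai (x+y+L^2))) x := by
      intro x
      have hlin : HasDerivAt (fun x' : ℝ => -2*L^3/3 - (x'+y)*L) (-(1*L)) x :=
        HasDerivAt.const_sub _ (((hasDerivAt_id x).add_const y).mul_const L)
      have hexp := hlin.exp
      have hs : HasDerivAt (fun x' : ℝ => x'+y+L^2) 1 x := by
        simpa using ((hasDerivAt_id x).add_const y).add_const (L^2)
      have hAix : HasDerivAt (fun x' : ℝ => Ai (x'+y+L^2)) (deriv Ai (x+y+L^2)) x := by
        simpa [Function.comp_def] using (hAi1.differentiableAt.hasDerivAt.comp x hs)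
      have hmul := hexp.mul hAix
      have heq : (fun x' => g L x' y)
          = fun x' => Real.exp (-2*L^3/3 - (x'+y)*L) * Ai (x'+y+L^2) := by
        funext x'
        rw [hg]
      rw [heq]
      convert hmul using 1
      exacts [rfl, rfl, rfl, by ring]
    have hderiv1 : (deriv fun x' => g L x' y)
        = fun x => Real.exp (-2*L^3/3 - (x+y)*L) *
            (deriv Ai (x+y+L^2) - L * Ai (x+y+L^2)) := by
      funext x
      exact (hx x).deriv
    -- second x-derivative
    have hx2 : HasDerivAt (fun x => Real.exp (-2*L^3/3 - (x+y)*L) *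
          (deriv Ai (x+y+L^2) - L * Ai (x+y+L^2)))
        (Real.exp (-2*L^3/3 - (x+y)*L) *
          ((x+y+L^2) * Ai (x+y+L^2) + L^2 * Ai (x+y+L^2)
            - 2*L * deriv Ai (x+y+L^2))) x := by
      have hlin : HasDerivAt (fun x' : ℝ => -2*L^3/3 - (x'+y)*L) (-(1*L)) x :=
        HasDerivAt.const_sub _ (((hasDerivAt_id x).add_const y).mul_const L)
      have hexp := hlin.exp
      have hs : HasDerivAt (fun x' : ℝ => x'+y+L^2) 1 x := by
        simpa using ((hasDerivAt_id x).add_const y).add_const (L^2)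
      have hAix : HasDerivAt (fun x' : ℝ => Ai (x'+y+L^2)) (deriv Ai (x+y+L^2)) x := by
        simpa [Function.comp_def] using (hAi1.differentiableAt.hasDerivAt.comp x hs)
      have hAix2 : HasDerivAt (fun x' : ℝ => deriv Ai (x'+y+L^2))
          ((x+y+L^2) * Ai (x+y+L^2)) x := by
        have := hAi2.differentiableAt.hasDerivAt.comp x hs
        simpa [hAiODE, Function.comp_def] using this
      have hmul := hexp.mul (hAix2.sub (hAix.const_mul L))
      convert hmul using 1
      exacts [rfl, rfl, rfl, by simp only [Pi.sub_apply]; ring]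
    rw [hderiv1, hx2.deriv]
    -- L-derivative
    have hL : HasDerivAt (fun L' => g L' x y)
        (Real.exp (-2*L^3/3 - (x+y)*L) *
          ((-2*L^2 - (x+y)) * Ai (x+y+L^2) + 2*L * deriv Ai (x+y+L^2))) L := by
      have hcube : HasDerivAt (fun L' : ℝ => -2*L'^3/3 - (x+y)*L')
          ((-2/3) * (3*L^2) - (x+y)*1) L := by
        have h1 : HasDerivAt (fun L' : ℝ => (-2/3) * L'^3) ((-2/3) * (3*L^2)) L := by
          have := (hasDerivAt_pow 3 L).const_mul ((-2:ℝ)/3)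
          simpa using this
        have h2 : HasDerivAt (fun L' : ℝ => (x+y)*L') ((x+y)*1) L :=
          (hasDerivAt_id L).const_mul (x+y)
        have h3 := h1.sub h2
        have : (fun L' : ℝ => (-2/3) * L'^3 - (x+y)*L')
            = fun L' : ℝ => -2*L'^3/3 - (x+y)*L' := by funext L'; ring
        rw [← this]; exact h3
      have hexp := hcube.exp
      have hs : HasDerivAt (fun L' : ℝ => x+y+L'^2) (2*L) L := by
        have := (hasDerivAt_pow 2 L).const_add (x+y)
        simpa using this
      have hAiL : HasDerivAt (fun L' : ℝ => Ai (x+y+L'^2))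
          (deriv Ai (x+y+L^2) * (2*L)) L :=
        hAi1.differentiableAt.hasDerivAt.comp L hs
      have hmul := hexp.mul hAiL
      have heq : (fun L' => g L' x y)
          = fun L' => Real.exp (-2*L'^3/3 - (x+y)*L') * Ai (x+y+L'^2) := by
        funext L'
        rw [hg]
      rw [heq]
      convert hmul using 1
      exacts [rfl, rfl, rfl, by ring]
    rw [hL.deriv]
    ring
  · intro x y
    rw [hg]
    norm_num
end
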